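/- Let a, b ∈ ℂ, set X = ab and Y = a³ + b³, and suppose 4(X−1)²(X+1) = (Y+2)². Then at least one of the matrices M₁₃, M₁₄ has both eigenvalues nonzero and of distinct absolute values, unless X³ + 2X² + X + 2Y = 0, or X³ + 4X² + 2Y − 1 = 0, or both X and Y are real numbers. -/

import Mathlib

/-!
Write x = ab, y = a³ + b³. Under the constraint on x and y, M₁₃ has trace 2x(x−1)² and
M₁₄ = M₁₃ + (x−1)²I, so both have eigenvalues m ± δ with the same δ, where
δ² = −(x−1)³(3x² + x + 2y), and centres m = x(x−1)² and (x+1)(x−1)². The eigenvalues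
m ± δ have equal absolute values iff Re(m δ̄) = 0. If this happens for both centres,
then w = (x−1)² δ̄ is purely imaginary and so is xw, forcing x to be real; then δ is purely
imaginary, δ² is real, and y is real too. The excluded cases x = 1 and δ = 0 also force x, y
real, and the two excluded factors are exactly what makes the determinants nonzero.
-/

open Matrix

/-- A 2×2 complex matrix has both eigenvalues nonzero and of distinct absolute values:
the eigenvalues are the roots α, β of the characteristic polynomial, equivalently the
pair with α + β = tr A and α·β = det A. -/
def nonzeroDistinctNormEigenvalues (A : Matrix (Fin 2) (Fin 2) ℂ) : Prop :=
  ∃ α β : ℂ, α + β = A.trace ∧ α * β = A.det ∧ α ≠ 0 ∧ β ≠ 0 ∧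
    ‖α‖ ≠ ‖β‖

open ComplexConjugate

lemma re_mul_conj_eq_zero_of_norm_add_eq_norm_sub {u w : ℂ} (h : ‖u + w‖ = ‖u - w‖) :
    (u * conj w).re = 0 := by
  have hadd := norm_add_sq_real w u
  have hsub := norm_sub_sq_real w u
  rw [add_comm, h, ← norm_neg, neg_sub] at hadd
  rw [← Complex.inner]
  linarith

lemma im_eq_zero_of_re_mul_eq_zero {x w : ℂ} (hw : w ≠ 0) (hre : w.re = 0)
    (h : (x * w).re = 0) : x.im = 0 := by
  have him : w.im ≠ 0 := fun him => hw (Complex.ext hre him)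
  simpa [hre, him] using h

/-- Under `4(x−1)²(x+1) = (y+2)²`, the quantity `(tr/2)² − det` of both `M₁₃ a b` and `M₁₄ a b`
at `x = ab`, `y = a³ + b³`. -/
def eigenDiscr (x y : ℂ) : ℂ := -((x - 1) ^ 3 * (3 * x ^ 2 + x + 2 * y))

lemma sub_one_ne_zero_of_eigenDiscr_ne_zero {x y : ℂ} (h : eigenDiscr x y ≠ 0) : x - 1 ≠ 0 := by
  rintro hx
  simp [eigenDiscr, hx] at h

lemma im_eq_zero_of_eigenDiscr_eq_zero {x y : ℂ} (h4 : 4 * (x - 1) ^ 2 * (x + 1) = (y + 2) ^ 2)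
    (hD : eigenDiscr x y = 0) : x.im = 0 ∧ y.im = 0 := by
  have hxy : (x = 1 ∧ y = -2) ∨ (x = 0 ∧ y = 0) ∨ (x = -8 / 9 ∧ y = -20 / 27) := by
    by_cases hx : x = 1
    · subst hx
      have hy : (y + 2) ^ 2 = 0 := by linear_combination -h4
      exact .inl ⟨rfl, eq_neg_of_add_eq_zero_left (pow_eq_zero_iff two_ne_zero |>.1 hy)⟩
    have hx1 : (x - 1) ^ 2 ≠ 0 := pow_ne_zero 2 (sub_ne_zero.2 hx)
    have hS : 3 * x ^ 2 + x + 2 * y = 0 :=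
      (mul_eq_zero.1 (neg_eq_zero.1 hD)).resolve_left (pow_ne_zero 3 (sub_ne_zero.2 hx))
    have hx' : (x - 1) ^ 2 * (x * (9 * x + 8)) = 0 := by
      linear_combination -4 * h4 - (2 * y + 4 - (3 * x + 4) * (x - 1)) * hS
    rcases mul_eq_zero.1 ((mul_eq_zero.1 hx').resolve_left hx1) with h0 | h8
    · exact .inr (.inl ⟨h0, by linear_combination hS / 2 - (3 * x + 1) / 2 * h0⟩)
    · exact .inr (.inr ⟨by linear_combination h8 / 9,
        by linear_combination hS / 2 + (-(1 / 6) * x + 5 / 54) * h8⟩)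
  rcases hxy with ⟨rfl, rfl⟩ | ⟨rfl, rfl⟩ | ⟨rfl, rfl⟩ <;> norm_num

lemma im_eq_zero_of_norm_add_eq_norm_sub {x y δ : ℂ} (hδ : δ ^ 2 = eigenDiscr x y) (hδ0 : δ ≠ 0)
    (h₀ : ‖x * (x - 1) ^ 2 + δ‖ = ‖x * (x - 1) ^ 2 - δ‖)
    (h₁ : ‖(x + 1) * (x - 1) ^ 2 + δ‖ = ‖(x + 1) * (x - 1) ^ 2 - δ‖) :
    x.im = 0 ∧ y.im = 0 := by
  have hx1 : x - 1 ≠ 0 := sub_one_ne_zero_of_eigenDiscr_ne_zero (hδ ▸ pow_ne_zero 2 hδ0)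
  set c := (x - 1) ^ 2 with hc
  have hw₀ : (x * (c * conj δ)).re = 0 := by
    simpa [mul_assoc] using re_mul_conj_eq_zero_of_norm_add_eq_norm_sub h₀
  have hw₁ : ((x + 1) * (c * conj δ)).re = 0 := by
    simpa [mul_assoc] using re_mul_conj_eq_zero_of_norm_add_eq_norm_sub h₁
  have hwre : (c * conj δ).re = 0 := by simpa [add_mul, hw₀] using hw₁
  have hxim : x.im = 0 := im_eq_zero_of_re_mul_eq_zero
    (mul_ne_zero (pow_ne_zero 2 hx1) ((map_ne_zero _).2 hδ0)) hwre hw₀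
  refine ⟨hxim, ?_⟩
  have hcim : c.im = 0 := by simp [hc, pow_two, hxim]
  have hcre : c.re ≠ 0 := fun h => pow_ne_zero 2 hx1 (Complex.ext h hcim)
  have hδre : δ.re = 0 := by simpa [hcim, hcre] using hwre
  have hxc : conj x = x := Complex.conj_eq_iff_im.2 hxim
  have hδc : conj (δ ^ 2) = δ ^ 2 := Complex.conj_eq_iff_im.2 (by simp [pow_two, hδre])
  rw [eigenDiscr] at hδ
  have hδ' := congrArg conj hδ
  simp only [hδc, map_neg, map_mul, map_pow, map_sub, map_add, map_ofNat, map_one, hxc] at hδ'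
  have hy : (2 * (x - 1) ^ 3) * (conj y - y) = 0 := by linear_combination hδ' - hδ
  have := (mul_eq_zero.1 hy).resolve_left (mul_ne_zero two_ne_zero (pow_ne_zero 3 hx1))
  exact Complex.conj_eq_iff_im.1 (sub_eq_zero.1 this)

lemma nonzeroDistinctNormEigenvalues_of_trace_det {A : Matrix (Fin 2) (Fin 2) ℂ} {m δ : ℂ}
    (ht : A.trace = 2 * m) (hd : A.det = (m + δ) * (m - δ)) (hd0 : A.det ≠ 0)
    (hne : ‖m + δ‖ ≠ ‖m - δ‖) : nonzeroDistinctNormEigenvalues A :=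
  ⟨m + δ, m - δ, by rw [ht]; ring, hd.symm, left_ne_zero_of_mul (hd ▸ hd0),
    right_ne_zero_of_mul (hd ▸ hd0), hne⟩

def M₁₃ (a b : ℂ) : Matrix (Fin 2) (Fin 2) ℂ :=
  !![a ^ 6 + 3 * a ^ 3 + 3 * a * b + b ^ 3,
     a ^ 4 + 2 * a ^ 2 * b + a * b ^ 3 + a + b ^ 5 + 2 * b ^ 2;
     a ^ 5 + a ^ 3 * b + 2 * a ^ 2 + 2 * a * b ^ 2 + b ^ 4 + b,
     a ^ 3 + 3 * a * b + b ^ 6 + 3 * b ^ 3]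

def M₁₄ (a b : ℂ) : Matrix (Fin 2) (Fin 2) ℂ :=
  !![a ^ 6 + 3 * a ^ 3 + a ^ 2 * b ^ 2 + a * b + b ^ 3 + 1,
     a ^ 4 + 2 * a ^ 2 * b + a * b ^ 3 + a + b ^ 5 + 2 * b ^ 2;
     a ^ 5 + a ^ 3 * b + 2 * a ^ 2 + 2 * a * b ^ 2 + b ^ 4 + b,
     a ^ 3 + a ^ 2 * b ^ 2 + a * b + b ^ 6 + 3 * b ^ 3 + 1]

section

variable {a b δ : ℂ} (h4 : 4 * (a * b - 1) ^ 2 * (a * b + 1) = (a ^ 3 + b ^ 3 + 2) ^ 2)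
  (hx1 : a * b - 1 ≠ 0) (hδ : δ ^ 2 = eigenDiscr (a * b) (a ^ 3 + b ^ 3))
include h4 hx1 hδ

lemma nonzeroDistinctNormEigenvalues_M₁₃
    (hT : (a * b) ^ 3 + 2 * (a * b) ^ 2 + a * b + 2 * (a ^ 3 + b ^ 3) ≠ 0)
    (hne : ‖a * b * (a * b - 1) ^ 2 + δ‖ ≠ ‖a * b * (a * b - 1) ^ 2 - δ‖) :
    nonzeroDistinctNormEigenvalues (M₁₃ a b) := by
  have hdet : (M₁₃ a b).det = (a * b - 1) ^ 3 *
      ((a * b) ^ 3 + 2 * (a * b) ^ 2 + a * b + 2 * (a ^ 3 + b ^ 3)) := by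
    rw [M₁₃, det_fin_two_of]; ring
  refine nonzeroDistinctNormEigenvalues_of_trace_det ?_ ?_ ?_ hne
  · rw [M₁₃, trace_fin_two_of]; linear_combination -h4
  · rw [hdet]; rw [eigenDiscr] at hδ; linear_combination hδ
  · rw [hdet]; exact mul_ne_zero (pow_ne_zero 3 hx1) hT

lemma nonzeroDistinctNormEigenvalues_M₁₄
    (hU : (a * b) ^ 3 + 4 * (a * b) ^ 2 + 2 * (a ^ 3 + b ^ 3) - 1 ≠ 0)
    (hne : ‖(a * b + 1) * (a * b - 1) ^ 2 + δ‖ ≠ ‖(a * b + 1) * (a * b - 1) ^ 2 - δ‖) :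
    nonzeroDistinctNormEigenvalues (M₁₄ a b) := by
  have hdet : (M₁₄ a b).det = (a * b - 1) ^ 3 *
      ((a * b) ^ 3 + 4 * (a * b) ^ 2 + 2 * (a ^ 3 + b ^ 3) - 1) := by
    rw [M₁₄, det_fin_two_of]; linear_combination -(a * b - 1) ^ 2 * h4
  refine nonzeroDistinctNormEigenvalues_of_trace_det ?_ ?_ ?_ hne
  · rw [M₁₄, trace_fin_two_of]; linear_combination -h4
  · rw [hdet]; rw [eigenDiscr] at hδ; linear_combination hδ
  · rw [hdet]; exact mul_ne_zero (pow_ne_zero 3 hx1) hU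

end

theorem stmt_13 (a b X Y : ℂ) (hX : X = a * b) (hY : Y = a ^ 3 + b ^ 3)
    (h4 : 4 * (X - 1) ^ 2 * (X + 1) = (Y + 2) ^ 2)
    (hT : X ^ 3 + 2 * X ^ 2 + X + 2 * Y ≠ 0)
    (hU : X ^ 3 + 4 * X ^ 2 + 2 * Y - 1 ≠ 0)
    (hreal : ¬ (X.im = 0 ∧ Y.im = 0)) :
    nonzeroDistinctNormEigenvalues
        !![a ^ 6 + 3 * a ^ 3 + 3 * a * b + b ^ 3,
           a ^ 4 + 2 * a ^ 2 * b + a * b ^ 3 + a + b ^ 5 + 2 * b ^ 2;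
           a ^ 5 + a ^ 3 * b + 2 * a ^ 2 + 2 * a * b ^ 2 + b ^ 4 + b,
           a ^ 3 + 3 * a * b + b ^ 6 + 3 * b ^ 3] ∨
      nonzeroDistinctNormEigenvalues
        !![a ^ 6 + 3 * a ^ 3 + a ^ 2 * b ^ 2 + a * b + b ^ 3 + 1,
           a ^ 4 + 2 * a ^ 2 * b + a * b ^ 3 + a + b ^ 5 + 2 * b ^ 2;
           a ^ 5 + a ^ 3 * b + 2 * a ^ 2 + 2 * a * b ^ 2 + b ^ 4 + b,
           a ^ 3 + a ^ 2 * b ^ 2 + a * b + b ^ 6 + 3 * b ^ 3 + 1] := by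
  subst hX hY
  have hD : eigenDiscr (a * b) (a ^ 3 + b ^ 3) ≠ 0 := fun hD =>
    hreal (im_eq_zero_of_eigenDiscr_eq_zero h4 hD)
  have hx1 := sub_one_ne_zero_of_eigenDiscr_ne_zero hD
  obtain ⟨δ, hδ⟩ := IsAlgClosed.exists_pow_nat_eq (eigenDiscr (a * b) (a ^ 3 + b ^ 3)) two_pos
  have hδ0 : δ ≠ 0 := by
    rintro rfl
    exact hD (by simpa using hδ.symm)
  by_contra h
  rw [not_or] at h
  refine hreal (im_eq_zero_of_norm_add_eq_norm_sub hδ hδ0 ?_ ?_)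
  · by_contra hne
    exact h.1 (nonzeroDistinctNormEigenvalues_M₁₃ h4 hx1 hδ hT hne)
  · by_contra hne
    exact h.2 (nonzeroDistinctNormEigenvalues_M₁₄ h4 hx1 hδ hU hne)
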